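/- For every rooted tree T with m ≥ 0 subtrees, each subtree root's restoration value is strictly less than the root's restoration value: R_T(v_i) < R_T(v) for each i, where v is the root and v_1,...,v_m are the roots of the subtrees. -/

import Mathlib

/-- A rooted tree: a root with a finite list of subtrees. -/
inductive RTree where
  | node : List RTree → RTree

/-- Restoration number and period of a rooted tree, by mutual recursion:
`RP (leaf) = (1, 2)`; for a root with subtrees `ts`,
`R = lcm of the periods of the subtrees` and
`P = (m+2)·R − Σᵢ (R / P(Tᵢ))·R(Tᵢ)`. -/
def RTree.RP : RTree → ℕ × ℕ
  | .node [] => (1, 2)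
  | .node ts@(_ :: _) =>
      let rps := ts.attach.map (fun t => RTree.RP t.1)
      let r := (rps.map Prod.snd).foldr Nat.lcm 1
      (r, (ts.length + 2) * r - (rps.map (fun q => r / q.2 * q.1)).sum)
  decreasing_by
    cases t with
    | mk t ht =>
      have := List.sizeOf_lt_of_mem ht
      simp_all; omega

/-- Restoration number of a rooted tree. -/
def RTree.R (t : RTree) : ℕ := t.RP.1

/-- Period of a rooted tree. -/
def RTree.P (t : RTree) : ℕ := t.RP.2

/-- Vertices are addressed by paths from the root (lists of child indices).
`restAt T w` is the restoration value `R_T(w)` of the vertex `w` in `T`: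
`R_T(root) = R(T)` and for `w` in the `k`-th subtree `T_k`,
`R_T(k :: w) = (R(T)/P(T_k)) · R_{T_k}(w)`. (Value `0` for invalid addresses.) -/
def RTree.restAt : RTree → List ℕ → ℕ
  | t, [] => t.R
  | .node ts, k :: rest =>
      match h : ts[k]? with
      | some tk => (RTree.node ts).R / tk.P * tk.restAt rest
      | none => 0
  decreasing_by
    simp only [List.getElem?_eq_some_iff] at h
    obtain ⟨hk, rfl⟩ := h
    simpa using Nat.lt_succ_of_le (List.sizeOf_le_of_mem (List.getElem_mem hk))

/-- `isVertex T w`: the address `w` denotes an actual vertex of `T`. -/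
def RTree.isVertex : RTree → List ℕ → Prop
  | _, [] => True
  | .node ts, k :: rest =>
      match h : ts[k]? with
      | some tk => tk.isVertex rest
      | none => False
  decreasing_by
    simp only [List.getElem?_eq_some_iff] at h
    obtain ⟨hk, rfl⟩ := h
    simpa using Nat.lt_succ_of_le (List.sizeOf_le_of_mem (List.getElem_mem hk))

/-! The invariant carried through the recursion is `R(T) < P(T)`. At a node with `m` subtrees,
`R` is the lcm `r` of the subtree periods, hence positive, and each of the `m` summands
`(r / P(Tᵢ)) · R(Tᵢ)` is at most `(r / P(Tᵢ)) · P(Tᵢ) = r`, so `P ≥ (m + 2) r - m r = 2 r > r`.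
For a subtree root this gives `R_T(vᵢ) = (r / P(Tᵢ)) · R(Tᵢ) < (r / P(Tᵢ)) · P(Tᵢ) = r`. -/

theorem Nat.div_mul_lt_of_dvd {p r q : ℕ} (hpr : p ∣ r) (hr : 0 < r) (hqp : q < p) :
    r / p * q < r := by
  have hrp : 0 < r / p := Nat.div_pos (Nat.le_of_dvd hr hpr) (by omega)
  calc r / p * q < r / p * p := Nat.mul_lt_mul_of_pos_left hqp hrp
    _ = r := Nat.div_mul_cancel hpr

namespace RTree

theorem R_node_cons (t : RTree) (ts : List RTree) :
    (node (t :: ts)).R = ((t :: ts).map P : Multiset ℕ).lcm := by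
  simp only [R, RP, List.map_attach_eq_pmap, List.pmap_eq_map, List.map_map, Function.comp_def]
  rfl

theorem P_node_cons (t : RTree) (ts : List RTree) :
    (node (t :: ts)).P = (ts.length + 3) * (node (t :: ts)).R
      - ((t :: ts).map fun u => (node (t :: ts)).R / u.P * u.R).sum := by
  simp [R, RP, P, Function.comp_def]

theorem P_dvd_R_of_mem {ts : List RTree} {t : RTree} (ht : t ∈ ts) : t.P ∣ (node ts).R := by
  obtain ⟨u, us, rfl⟩ := List.exists_cons_of_ne_nil (List.ne_nil_of_mem ht)
  rw [R_node_cons]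
  exact Multiset.dvd_lcm (by simpa using List.mem_map_of_mem ht)

theorem R_node_pos {ts : List RTree} (h : ∀ u ∈ ts, 0 < u.P) : 0 < (node ts).R := by
  cases ts with
  | nil => simp [R, RP]
  | cons t ts =>
    rw [Nat.pos_iff_ne_zero, R_node_cons, Ne, Multiset.lcm_eq_zero_iff, Multiset.mem_coe,
      List.mem_map]
    rintro ⟨u, hu, hzero⟩
    exact (h u hu).ne' hzero

theorem R_lt_P : ∀ t : RTree, t.R < t.P
  | .node [] => by simp [R, P, RP]
  | .node (t :: ts) => by
    have ih : ∀ u ∈ t :: ts, u.R < u.P := fun u hu =>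
      have := List.sizeOf_lt_of_mem hu
      R_lt_P u
    have hr : 0 < (node (t :: ts)).R := R_node_pos fun u hu => (ih u hu).pos
    rw [P_node_cons]
    set r := (node (t :: ts)).R
    have hsum : ((t :: ts).map fun u => r / u.P * u.R).sum ≤ (ts.length + 1) * r := by
      have := List.sum_le_card_nsmul ((t :: ts).map fun u => r / u.P * u.R) r <| by
        intro _ hx
        obtain ⟨u, hu, rfl⟩ := List.mem_map.mp hx
        exact (Nat.mul_le_mul_left _ (ih u hu).le).trans (Nat.div_mul_le_self r u.P)
      rwa [List.length_map, List.length_cons, smul_eq_mul] at this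
    have : (ts.length + 3) * r = (ts.length + 1) * r + 2 * r := by ring
    omega
termination_by t => sizeOf t

theorem R_pos (t : RTree) : 0 < t.R := by
  obtain ⟨ts⟩ := t
  exact R_node_pos fun u _ => (R_lt_P u).pos

theorem restAt_node_cons {ts : List RTree} {i : ℕ} (hi : i < ts.length) (w : List ℕ) :
    (node ts).restAt (i :: w) = (node ts).R / ts[i].P * ts[i].restAt w := by
  rw [restAt]
  split <;> simp_all

end RTree

/-- Each subtree root's restoration value is strictly less than the root's:
`R_T(vᵢ) < R_T(v)` for every subtree index `i`. -/
theorem subtree_root_restoration_lt (ts : List RTree) (i : ℕ) (hi : i < ts.length) :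
    (RTree.node ts).restAt [i] < (RTree.node ts).restAt [] := by
  rw [RTree.restAt_node_cons hi, RTree.restAt, RTree.restAt]
  exact Nat.div_mul_lt_of_dvd (RTree.P_dvd_R_of_mem (List.getElem_mem hi)) (RTree.R_pos _)
    (RTree.R_lt_P _)
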